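/- Let S ≥ 1, let q_1, …, q_S ≥ 0 with Σ_{s=1}^S q_s = 1, let E_X > 0 and E_{Z_1}, …, E_{Z_S} > 0, and let 0 < ε < 1. Suppose L₁ ≥ -log₂(ε) - min_s log₂(E_{Z_s}), L₂ ≥ -log₂(ε) + log₂(E_X), and min_s E_X/E_{Z_s} ≥ 1/ε, where L₁, L₂ are integers. With p_l = 1/(1 + e^{2^l/E_X}) and p̃_{l,s} = 1/(1 + e^{2^l/E_{Z_s}}), the rate R = Σ_{l=-L₁}^{L₂} Σ_{s=1}^S q_s·[H(p_l ⊗ p̃_{l,s}) - H(p̃_{l,s})] satisfies R ≥ Σ_{s=1}^S q_s·log₂(1 + E_X/E_{Z_s}) - 5·log₂(e)·ε. -/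

import Mathlib

/-- The binary entropy function (base 2): `H(p) = -p log₂ p - (1-p) log₂ (1-p)`. -/
noncomputable def binEnt (p : ℝ) : ℝ :=
  -(p * Real.logb 2 p) - (1 - p) * Real.logb 2 (1 - p)

/-- The binary convolution `p ⊗ q = p(1-q) + q(1-p)`. -/
def binConv (p q : ℝ) : ℝ := p * (1 - q) + q * (1 - p)

/-
Write `G t` for the entropy (in nats) of the geometric distribution of ratio `e^{-t}`, i.e. of
the integer part of an exponential variable of mean `1/t`. The lowest binary digit of such a
variable is Bernoulli `1/(1 + e^t)` and independent of the other digits, which are geometric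
of ratio `e^{-2t}`; hence `G t = H(1/(1 + e^t)) + G (2t)`, and the sum of the level entropies
`H(p_l)`, `-L₁ ≤ l ≤ L₂`, telescopes to `G(2^{-L₁}/E) - G(2^{L₂+1}/E)`. Since
`G t = -log t + 1 + O(t)` as `t → 0` and `0 ≤ G T ≤ 2/T`, the input sum exceeds the noise sum
by at least `log (E_X / E_Z) - 3ε` nats, and
`log (1 + E_X/E_Z) ≤ log (E_X/E_Z) + E_Z/E_X` costs one more `ε`. Finally
`p ≤ p ⊗ p̃ ≤ 1/2`, where `H` is monotone, and the bound averages over states.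
-/

open Real Finset

theorem Finset.sum_Ico_sub_add_one {M : Type*} [AddCommGroup M] (f : ℤ → M) {a b : ℤ}
    (hab : a ≤ b) : ∑ l ∈ Ico a b, (f l - f (l + 1)) = f a - f b := by
  induction b, hab using Int.leInduction with
  | base => simp
  | succ n hn ih =>
    rw [Ico_add_one_right_eq_Icc, ← Ico_insert_right hn, sum_insert (by simp), ih]
    abel

/-- Entropy in nats of the geometric distribution `P(n) = (1 - e^{-t}) e^{-nt}`, `n ∈ ℕ`. -/
noncomputable def geomEntropy (t : ℝ) : ℝ :=
  -log (1 - exp (-t)) + t * exp (-t) / (1 - exp (-t))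

lemma geomEntropy_sub_geomEntropy_two_mul {t : ℝ} (ht : 0 < t) :
    geomEntropy t - geomEntropy (2 * t) = binEntropy (1 / (1 + exp t)) := by
  set u := exp (-t) with hu
  have hu0 : 0 < u := exp_pos _
  have hu1 : u < 1 := exp_lt_one_iff.mpr (by linarith)
  have hp : 1 / (1 + exp t) = u / (1 + u) := by rw [hu, exp_neg]; field_simp; ring
  have hu2 : exp (-(2 * t)) = u ^ 2 := by rw [hu, ← exp_nat_mul]; ring_nf
  have h1u : 1 - u ≠ 0 := by linarith
  have hsq : 1 - u ^ 2 = (1 - u) * (1 + u) := by ring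
  have hlogu : log u = -t := log_exp _
  have h1p : (1 - u / (1 + u))⁻¹ = 1 + u := by field_simp; ring
  have hpinv : (u / (1 + u))⁻¹ = (1 + u) / u := inv_div _ _
  rw [geomEntropy, geomEntropy, ← hu, hu2, hp, binEntropy, h1p, hpinv, hsq,
    log_mul (by linarith) (by linarith), log_div (by linarith) hu0.ne', hlogu]
  field_simp
  ring

lemma sum_Icc_binEntropy_eq_geomEntropy_sub {E : ℝ} (hE : 0 < E) {a b : ℤ} (hab : a ≤ b + 1) :
    ∑ l ∈ Icc a b, binEntropy (1 / (1 + exp (2 ^ l / E))) =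
      geomEntropy (2 ^ a / E) - geomEntropy (2 ^ (b + 1) / E) := by
  rw [← Ico_add_one_right_eq_Icc,
    ← sum_Ico_sub_add_one (fun l : ℤ ↦ geomEntropy (2 ^ l / E)) hab]
  refine sum_congr rfl fun l _ ↦ ?_
  rw [zpow_add_one₀ two_ne_zero, mul_comm, mul_div_assoc,
    geomEntropy_sub_geomEntropy_two_mul (by positivity)]

lemma neg_log_add_one_sub_le_geomEntropy {t : ℝ} (ht : 0 < t) :
    -log t + 1 - t ≤ geomEntropy t := by
  have hs : 0 < 1 - exp (-t) := by linarith [exp_lt_one_iff.mpr (neg_lt_zero.mpr ht)]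
  have hst : 1 - exp (-t) ≤ t := by linarith [add_one_le_exp (-t)]
  have hlog : log (1 - exp (-t)) ≤ log t := log_le_log hs hst
  have hterm : exp (-t) ≤ t * exp (-t) / (1 - exp (-t)) := by
    rw [le_div_iff₀ hs]; nlinarith [exp_pos (-t)]
  rw [geomEntropy]
  linarith [add_one_le_exp (-t)]

lemma geomEntropy_le_neg_log_add_one_add {t : ℝ} (ht : 0 < t) :
    geomEntropy t ≤ -log t + 1 + t := by
  set s := 1 - exp (-t) with hs_def
  have hs : 0 < s := by linarith [exp_lt_one_iff.mpr (neg_lt_zero.mpr ht)]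
  have hlog : log t - log s ≤ t / s - 1 := by
    rw [← log_div ht.ne' hs.ne']; exact log_le_sub_one_of_pos (by positivity)
  -- `(1 + t) e^{-t} ≤ 1`, i.e. `t ≤ s (1 + t)`
  have hkey : t ≤ s * (1 + t) := by
    have := mul_le_mul_of_nonneg_right (add_one_le_exp t) (exp_pos (-t)).le
    rw [← exp_add, add_neg_cancel, exp_zero] at this
    nlinarith
  have hterm : t * exp (-t) / s = t / s - t := by
    rw [show exp (-t) = 1 - s by ring]; field_simp
  have hts : t / s ≤ 1 + t := by rw [div_le_iff₀ hs]; linarith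
  rw [geomEntropy, ← hs_def, hterm]
  linarith

lemma geomEntropy_nonneg {t : ℝ} (ht : 0 < t) : 0 ≤ geomEntropy t := by
  have hs : 0 < 1 - exp (-t) := by linarith [exp_lt_one_iff.mpr (neg_lt_zero.mpr ht)]
  have hlog : log (1 - exp (-t)) ≤ 0 := log_nonpos hs.le (by linarith [exp_pos (-t)])
  have hterm : 0 ≤ t * exp (-t) / (1 - exp (-t)) := by positivity
  rw [geomEntropy]
  linarith

lemma geomEntropy_le_two_div {t : ℝ} (ht : 0 < t) : geomEntropy t ≤ 2 / t := by
  have hE : 0 < exp t - 1 := by linarith [one_lt_exp_iff.mpr ht]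
  have hs : 1 - exp (-t) = (exp t - 1) / exp t := by rw [exp_neg]; field_simp
  have hlog : -log (1 - exp (-t)) ≤ 1 / (exp t - 1) := by
    rw [hs, ← log_inv, inv_div]
    have := log_le_sub_one_of_pos (div_pos (exp_pos t) hE)
    have e : exp t / (exp t - 1) - 1 = 1 / (exp t - 1) := by field_simp; ring
    linarith
  have hterm : t * exp (-t) / (1 - exp (-t)) = t / (exp t - 1) := by
    rw [hs, exp_neg]; field_simp
  have hfrac : (1 + t) / (exp t - 1) ≤ 2 / t := by
    rw [div_le_div_iff₀ hE ht]; nlinarith [quadratic_le_exp_of_nonneg ht.le]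
  rw [geomEntropy, hterm]
  linarith [add_div 1 t (exp t - 1)]

lemma log_div_sub_add_le_geomEntropy_sub {s t : ℝ} (hs : 0 < s) (ht : 0 < t) :
    log (t / s) - (s + t) ≤ geomEntropy s - geomEntropy t := by
  rw [log_div ht.ne' hs.ne']
  linarith [neg_log_add_one_sub_le_geomEntropy hs, geomEntropy_le_neg_log_add_one_add ht]

lemma log_one_add_le_log_add_inv {x : ℝ} (hx : 0 < x) : log (1 + x) ≤ log x + x⁻¹ := by
  have h := log_le_sub_one_of_pos (show 0 < (1 + x) / x by positivity)
  rw [log_div (by positivity) hx.ne', add_div, div_self hx.ne', one_div] at h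
  linarith

lemma log_one_add_div_sub_le_sum_binEntropy_sub {EX EZ ε : ℝ} {a b : ℤ} (hEX : 0 < EX)
    (hEZ : 0 < EZ) (hε1 : ε < 1) (ha : 2 ^ a ≤ ε * EZ) (hb : EX ≤ ε * 2 ^ b)
    (hsnr : EZ ≤ ε * EX) :
    log (1 + EX / EZ) - 4 * ε ≤ ∑ l ∈ Icc a b,
      (binEntropy (1 / (1 + exp (2 ^ l / EX))) - binEntropy (1 / (1 + exp (2 ^ l / EZ)))) := by
  have ha_le : (2 : ℝ) ^ a ≤ ε * EX := by nlinarith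
  have hb_le : EX ≤ 2 ^ b := by nlinarith [zpow_pos (two_pos (α := ℝ)) b]
  have hab : a ≤ b + 1 := by
    have : (2 : ℝ) ^ a ≤ 2 ^ (b + 1) := by
      rw [zpow_add_one₀ two_ne_zero]; nlinarith [zpow_pos (two_pos (α := ℝ)) b]
    exact (zpow_le_zpow_iff_right₀ one_lt_two).mp this
  rw [sum_sub_distrib, sum_Icc_binEntropy_eq_geomEntropy_sub hEX hab,
    sum_Icc_binEntropy_eq_geomEntropy_sub hEZ hab]
  have hhead := log_div_sub_add_le_geomEntropy_sub (s := 2 ^ a / EX) (t := 2 ^ a / EZ)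
    (by positivity) (by positivity)
  rw [div_div_div_cancel_left' _ _ (zpow_ne_zero a two_ne_zero)] at hhead
  have htailX := geomEntropy_le_two_div (t := 2 ^ (b + 1) / EX) (by positivity)
  have htailZ := geomEntropy_nonneg (t := 2 ^ (b + 1) / EZ) (by positivity)
  have hcap := log_one_add_le_log_add_inv (div_pos hEX hEZ)
  have hX : 2 ^ a / EX ≤ ε := by rw [div_le_iff₀ hEX]; exact ha_le
  have hZ : 2 ^ a / EZ ≤ ε := by rw [div_le_iff₀ hEZ]; exact ha
  have hT : 2 / (2 ^ (b + 1) / EX) ≤ ε := by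
    rw [div_div_eq_mul_div, zpow_add_one₀ two_ne_zero, div_le_iff₀ (by positivity)]; linarith
  have hsnr' : (EX / EZ)⁻¹ ≤ ε := by rw [inv_div, div_le_iff₀ hEX]; exact hsnr
  linarith

lemma binEnt_eq_binEntropy_div (p : ℝ) : binEnt p = binEntropy p / log 2 := by
  rw [binEnt, binEntropy, logb, logb, log_inv, log_inv]
  ring

lemma binEnt_le_binEnt_binConv {p r : ℝ} (hp : 0 ≤ p) (hp2 : p ≤ 2⁻¹) (hr : 0 ≤ r)
    (hr2 : r ≤ 2⁻¹) : binEnt p ≤ binEnt (binConv p r) := by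
  have hle : p ≤ binConv p r := by unfold binConv; nlinarith
  have hle2 : binConv p r ≤ 2⁻¹ := by unfold binConv; nlinarith
  rw [binEnt_eq_binEntropy_div, binEnt_eq_binEntropy_div]
  gcongr
  exact binEntropy_strictMonoOn.monotoneOn ⟨hp, hp2⟩ ⟨hp.trans hle, hle2⟩ hle

lemma one_div_one_add_exp_le_half {t : ℝ} (ht : 0 ≤ t) : 1 / (1 + exp t) ≤ 2⁻¹ := by
  rw [div_le_iff₀ (by positivity)]
  linarith [one_le_exp ht]

lemma logb_one_add_div_sub_le_sum_binEnt_sub {EX EZ ε : ℝ} {a b : ℤ} (hEX : 0 < EX)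
    (hEZ : 0 < EZ) (hε : 0 < ε) (hε1 : ε < 1) (ha : 2 ^ a ≤ ε * EZ) (hb : EX ≤ ε * 2 ^ b)
    (hsnr : EZ ≤ ε * EX) :
    logb 2 (1 + EX / EZ) - 5 * logb 2 (exp 1) * ε ≤ ∑ l ∈ Icc a b,
      (binEnt (1 / (1 + exp (2 ^ l / EX))) - binEnt (1 / (1 + exp (2 ^ l / EZ)))) := by
  simp only [binEnt_eq_binEntropy_div, ← sub_div, ← sum_div, logb, log_exp]
  have := log_one_add_div_sub_le_sum_binEntropy_sub hEX hEZ hε1 ha hb hsnr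
  rw [show 5 * (1 / log 2) * ε = 5 * ε / log 2 by ring, ← sub_div]
  gcongr
  linarith

lemma two_zpow_neg_le_of_neg_logb_le {x : ℝ} (hx : 0 < x) {L : ℤ} (h : -logb 2 x ≤ L) :
    (2 : ℝ) ^ (-L) ≤ x := by
  rw [← rpow_intCast, Int.cast_neg, ← le_logb_iff_rpow_le one_lt_two hx]
  linarith

lemma le_two_zpow_of_logb_le {x : ℝ} (hx : 0 < x) {L : ℤ} (h : logb 2 x ≤ L) :
    x ≤ (2 : ℝ) ^ L := by
  rwa [← rpow_intCast, ← logb_le_iff_le_rpow one_lt_two hx]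

/-- **Theorem 3 of the paper.** For the fading additive exponential noise channel with `S`
fading states (state `s` having probability `q s` and noise mean `EZ s`), input mean `E_X`,
Bernoulli input parameters `p_l = 1/(1 + exp (2^l / E_X))` and noise parameters
`p̃_{l,s} = 1/(1 + exp (2^l / EZ s))`, if `0 < ε < 1`,
`L₁ ≥ -log₂ ε - min_s log₂ (EZ s)`, `L₂ ≥ -log₂ ε + log₂ E_X` and `min_s E_X / EZ s ≥ 1/ε`,
then the achievable rate
`R = ∑_{l = -L₁}^{L₂} ∑_s q_s [H(p_l ⊗ p̃_{l,s}) - H(p̃_{l,s})]` satisfies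
`R ≥ ∑_s q_s log₂ (1 + E_X / EZ s) - 5 log₂(e) ε`. -/
theorem fading_AEN_achievable_rate (S : ℕ) (hS : 1 ≤ S)
    (q : Fin S → ℝ) (hq : ∀ s, 0 ≤ q s) (hq1 : ∑ s, q s = 1)
    (EX : ℝ) (hEX : 0 < EX) (EZ : Fin S → ℝ) (hEZ : ∀ s, 0 < EZ s)
    (ε : ℝ) (hε : 0 < ε) (hε1 : ε < 1) (L1 L2 : ℤ)
    (hL1 : -Real.logb 2 ε -
        Finset.univ.inf' ⟨⟨0, hS⟩, Finset.mem_univ _⟩ (fun s => Real.logb 2 (EZ s)) ≤ (L1 : ℝ))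
    (hL2 : -Real.logb 2 ε + Real.logb 2 EX ≤ (L2 : ℝ))
    (hSNR : 1 / ε ≤ Finset.univ.inf' ⟨⟨0, hS⟩, Finset.mem_univ _⟩ (fun s => EX / EZ s)) :
    ∑ s, q s * Real.logb 2 (1 + EX / EZ s) - 5 * Real.logb 2 (Real.exp 1) * ε ≤
      ∑ l ∈ Finset.Icc (-L1) L2, ∑ s, q s *
        (binEnt (binConv (1 / (1 + Real.exp (2 ^ l / EX)))
            (1 / (1 + Real.exp (2 ^ l / EZ s)))) -
          binEnt (1 / (1 + Real.exp (2 ^ l / EZ s)))) := by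
  have hδ : ∀ s, (2 : ℝ) ^ (-L1) ≤ ε * EZ s := fun s ↦ by
    refine two_zpow_neg_le_of_neg_logb_le (mul_pos hε (hEZ s)) ?_
    rw [logb_mul hε.ne' (hEZ s).ne']
    linarith [Finset.inf'_le (fun s ↦ logb 2 (EZ s)) (Finset.mem_univ s)]
  have hT : EX ≤ ε * 2 ^ L2 := by
    rw [← div_le_iff₀' hε]
    exact le_two_zpow_of_logb_le (div_pos hEX hε) (by rw [logb_div hEX.ne' hε.ne']; linarith)
  have hsnr : ∀ s, EZ s ≤ ε * EX := fun s ↦ by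
    have := (div_le_div_iff₀ hε (hEZ s)).mp (hSNR.trans (Finset.inf'_le _ (Finset.mem_univ s)))
    linarith
  calc ∑ s, q s * logb 2 (1 + EX / EZ s) - 5 * logb 2 (exp 1) * ε
      = ∑ s, q s * (logb 2 (1 + EX / EZ s) - 5 * logb 2 (exp 1) * ε) := by
        simp only [mul_sub, sum_sub_distrib, ← sum_mul, hq1, one_mul]
    _ ≤ ∑ s, q s * ∑ l ∈ Icc (-L1) L2, (binEnt (1 / (1 + exp (2 ^ l / EX))) -
          binEnt (1 / (1 + exp (2 ^ l / EZ s)))) := by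
        gcongr with s
        · exact hq s
        · exact logb_one_add_div_sub_le_sum_binEnt_sub hEX (hEZ s) hε hε1 (hδ s) hT (hsnr s)
    _ = ∑ l ∈ Icc (-L1) L2, ∑ s, q s * (binEnt (1 / (1 + exp (2 ^ l / EX))) -
          binEnt (1 / (1 + exp (2 ^ l / EZ s)))) := by
        simp only [mul_sum]; exact sum_comm
    _ ≤ _ := by
        gcongr with l _ s
        · exact hq s
        · exact binEnt_le_binEnt_binConv (by positivity) (one_div_one_add_exp_le_half
            (by positivity)) (by positivity) (one_div_one_add_exp_le_half (by positivity [hEZ s]))
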